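/- arXiv:2203.01473 — 10 statements merged into one kernel-verified Lean document; each statement's English description precedes it below -/
import Mathlib

section
/- A bounded linear operator A on a complex Hilbert space H is posinormal (i.e., there exists a positive operator P with AA* = A*PA) if and only if the range of A is contained in the range of A*. -/
/-!
Both directions are instances of Douglas' factorization lemma.  If `A A† = A† P A`, then
`‖A† x‖² = re ⟪P (A x), A x⟫ ≤ ‖P‖ ‖A x‖²`, so for each `y` the map `A x ↦ ⟪y, A† x⟫` is a
bounded functional on the range of `A`; extending it by Hahn–Banach and representing it by Riesz
gives `z` with `A† z = A y`.  Conversely, if `range A ≤ range A†`, then inverting `A†` on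
`(ker A†)ᗮ` yields a linear `C` with `A = A† C`, bounded by the closed graph theorem; then
`A† = C† A` and `A A† = A† (C C†) A` with `C C†` positive.
-/

open ContinuousLinearMap
open scoped InnerProductSpace

namespace LinearMap

variable {R M N P : Type*} [Ring R] [AddCommGroup M] [AddCommGroup N] [AddCommGroup P]
  [Module R M] [Module R N] [Module R P]

theorem exists_comp_rangeRestrict_eq_of_ker_le {f : M →ₗ[R] N} {g : M →ₗ[R] P}
    (h : ker f ≤ ker g) : ∃ g' : range f →ₗ[R] P, g' ∘ₗ f.rangeRestrict = g :=
  ⟨(ker f).liftQ g h ∘ₗ f.quotKerEquivRange.symm.toLinearMap, by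
    ext x
    exact congrArg ((ker f).liftQ g h)
      (f.quotKerEquivRange_symm_apply_image x (mem_range_self f x))⟩

end LinearMap

section Factorization

variable {𝕜 E F : Type*} [RCLike 𝕜] [NormedAddCommGroup E] [NormedSpace 𝕜 E]
  [NormedAddCommGroup F] [NormedSpace 𝕜 F]

theorem StrongDual.exists_comp_eq_of_norm_le {φ : StrongDual 𝕜 E} {T : E →L[𝕜] F} {c : ℝ}
    (h : ∀ x, ‖φ x‖ ≤ c * ‖T x‖) : ∃ g : StrongDual 𝕜 F, g ∘L T = φ := by
  have hker : (T : E →ₗ[𝕜] F).ker ≤ (φ : E →ₗ[𝕜] 𝕜).ker := fun x hx =>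
    norm_le_zero_iff.mp <| (h x).trans_eq <| by simp [show T x = 0 from hx]
  obtain ⟨f, hf⟩ := LinearMap.exists_comp_rangeRestrict_eq_of_ker_le hker
  have hfT : ∀ x, f ⟨T x, x, rfl⟩ = φ x := fun x => LinearMap.congr_fun hf x
  have hbound : ∀ v, ‖f v‖ ≤ c * ‖v‖ := by
    rintro ⟨_, x, rfl⟩
    simpa [hfT] using h x
  obtain ⟨g, hg, -⟩ := exists_extension_norm_eq _ (f.mkContinuous c hbound)
  exact ⟨g, ext fun x => (hg ⟨T x, x, rfl⟩).trans (hfT x)⟩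

end Factorization

section Adjoint

variable {𝕜 E F G : Type*} [RCLike 𝕜]
  [NormedAddCommGroup E] [InnerProductSpace 𝕜 E] [CompleteSpace E]
  [NormedAddCommGroup F] [InnerProductSpace 𝕜 F] [CompleteSpace F]
  [NormedAddCommGroup G] [InnerProductSpace 𝕜 G] [CompleteSpace G]

theorem ContinuousLinearMap.range_adjoint_le_of_norm_le {S : E →L[𝕜] F} {T : E →L[𝕜] G} {c : ℝ}
    (h : ∀ x, ‖S x‖ ≤ c * ‖T x‖) :
    (adjoint S : F →ₗ[𝕜] E).range ≤ (adjoint T : G →ₗ[𝕜] E).range := by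
  rintro _ ⟨y, rfl⟩
  have hbound : ∀ x, ‖innerSL 𝕜 (adjoint S y) x‖ ≤ ‖y‖ * c * ‖T x‖ := fun x => by
    rw [innerSL_apply_apply, adjoint_inner_left, mul_assoc]
    exact (norm_inner_le_norm _ _).trans (by gcongr; exact h x)
  obtain ⟨g, hg⟩ := StrongDual.exists_comp_eq_of_norm_le hbound
  refine ⟨(InnerProductSpace.toDual 𝕜 G).symm g, ext_inner_right 𝕜 fun x => ?_⟩
  calc ⟪adjoint T ((InnerProductSpace.toDual 𝕜 G).symm g), x⟫_𝕜
      = g (T x) := by rw [adjoint_inner_left, InnerProductSpace.toDual_symm_apply]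
    _ = ⟪adjoint S y, x⟫_𝕜 := congrArg (· x) hg

end Adjoint

section ClosedGraph

variable {𝕜 E F G : Type*} [NontriviallyNormedField 𝕜]
  [NormedAddCommGroup E] [NormedSpace 𝕜 E] [CompleteSpace E]
  [NormedAddCommGroup F] [NormedSpace 𝕜 F] [CompleteSpace F]
  [NormedAddCommGroup G] [NormedSpace 𝕜 G]

theorem ContinuousLinearMap.exists_comp_eq_of_injective_of_range_le {S : F →L[𝕜] G}
    {T : E →L[𝕜] G} (hS : Function.Injective S)
    (h : (T : E →ₗ[𝕜] G).range ≤ (S : F →ₗ[𝕜] G).range) : ∃ C : E →L[𝕜] F, S ∘L C = T := by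
  let e := LinearEquiv.ofInjective (S : F →ₗ[𝕜] G) hS
  let C : E →ₗ[𝕜] F :=
    e.symm.toLinearMap ∘ₗ (T : E →ₗ[𝕜] G).codRestrict _ fun x => h ⟨x, rfl⟩
  have hSC : ∀ x, S (C x) = T x := fun x => congrArg Subtype.val (e.apply_symm_apply _)
  have hgraph : (C.graph : Set (E × F)) = {p | S p.2 = T p.1} := by
    ext ⟨x, y⟩
    simp only [SetLike.mem_coe, LinearMap.mem_graph_iff, Set.mem_ofPred_eq]
    exact ⟨fun hy => hy ▸ hSC x, fun hy => hS (hy.trans (hSC x).symm)⟩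
  have hclosed : IsClosed (C.graph : Set (E × F)) :=
    hgraph ▸ isClosed_eq (by fun_prop) (by fun_prop)
  exact ⟨.ofIsClosedGraph hclosed, ext hSC⟩

end ClosedGraph

section Douglas

variable {𝕜 E F G : Type*} [RCLike 𝕜]
  [NormedAddCommGroup E] [NormedSpace 𝕜 E] [CompleteSpace E]
  [NormedAddCommGroup F] [InnerProductSpace 𝕜 F]
  [NormedAddCommGroup G] [NormedSpace 𝕜 G]

theorem ContinuousLinearMap.injective_comp_subtype_orthogonal_ker (S : F →L[𝕜] G) :
    Function.Injective ((S : F →ₗ[𝕜] G) ∘ₗ (S : F →ₗ[𝕜] G).kerᗮ.subtype) := by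
  refine (injective_iff_map_eq_zero _).mpr fun v hv => ?_
  have hv_mem : (v : F) ∈ (S : F →ₗ[𝕜] G).ker ⊓ (S : F →ₗ[𝕜] G).kerᗮ := ⟨hv, v.2⟩
  rw [Submodule.inf_orthogonal_eq_bot] at hv_mem
  exact Subtype.ext hv_mem

variable [CompleteSpace F]

theorem ContinuousLinearMap.range_le_range_comp_subtype_orthogonal_ker (S : F →L[𝕜] G) :
    (S : F →ₗ[𝕜] G).range ≤ ((S : F →ₗ[𝕜] G) ∘ₗ (S : F →ₗ[𝕜] G).kerᗮ.subtype).range := by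
  rintro _ ⟨u, rfl⟩
  set K := (S : F →ₗ[𝕜] G).ker
  have : CompleteSpace K := S.isClosed_ker.completeSpace_coe
  have hK : S (K.starProjection u) = 0 := K.starProjection_apply_mem u
  exact ⟨⟨u - K.starProjection u, K.sub_starProjection_mem_orthogonal u⟩, by simp [hK]⟩

theorem ContinuousLinearMap.exists_comp_eq_of_range_le {S : F →L[𝕜] G} {T : E →L[𝕜] G}
    (h : (T : E →ₗ[𝕜] G).range ≤ (S : F →ₗ[𝕜] G).range) : ∃ C : E →L[𝕜] F, S ∘L C = T := by
  set K := (S : F →ₗ[𝕜] G).kerᗮ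
  have : CompleteSpace K := Submodule.isClosed_orthogonal _ |>.completeSpace_coe
  obtain ⟨C, hC⟩ := exists_comp_eq_of_injective_of_range_le (S := S ∘L K.subtypeL)
    S.injective_comp_subtype_orthogonal_ker (h.trans S.range_le_range_comp_subtype_orthogonal_ker)
  exact ⟨K.subtypeL ∘L C, by rw [← hC, comp_assoc]⟩

end Douglas

section Posinormal

variable {H : Type*} [NormedAddCommGroup H] [InnerProductSpace ℂ H] [CompleteSpace H]

theorem ContinuousLinearMap.norm_adjoint_apply_le_of_comp_adjoint_eq {A P : H →L[ℂ] H}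
    (hAP : A ∘L adjoint A = adjoint A ∘L P ∘L A) (x : H) :
    ‖adjoint A x‖ ≤ √‖P‖ * ‖A x‖ := by
  have hsq : ‖adjoint A x‖ ^ 2 ≤ ‖P‖ * ‖A x‖ ^ 2 :=
    calc ‖adjoint A x‖ ^ 2 = RCLike.re ⟪(A ∘L adjoint A) x, x⟫_ℂ := by
          rw [apply_norm_sq_eq_inner_adjoint_left, adjoint_adjoint]
      _ = RCLike.re ⟪P (A x), A x⟫_ℂ := by rw [hAP]; simp [adjoint_inner_left]
      _ ≤ ‖P (A x)‖ * ‖A x‖ := (RCLike.re_le_norm _).trans (norm_inner_le_norm _ _)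
      _ ≤ ‖P‖ * ‖A x‖ ^ 2 := by rw [sq, ← mul_assoc]; gcongr; exact P.le_opNorm _
  rw [← Real.sqrt_sq (norm_nonneg (A x)), ← Real.sqrt_mul (norm_nonneg P)]
  exact Real.le_sqrt_of_sq_le hsq

end Posinormal

theorem posinormal_iff_range_le
    {H : Type*} [NormedAddCommGroup H] [InnerProductSpace ℂ H] [CompleteSpace H]
    (A : H →L[ℂ] H) :
    (∃ P : H →L[ℂ] H, P.IsPositive ∧ A ∘L adjoint A = adjoint A ∘L P ∘L A) ↔
      LinearMap.range (A : H →ₗ[ℂ] H) ≤ LinearMap.range ((adjoint A : H →L[ℂ] H) : H →ₗ[ℂ] H) := by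
  constructor
  · rintro ⟨P, -, hAP⟩
    simpa only [adjoint_adjoint] using
      range_adjoint_le_of_norm_le (S := adjoint A) (T := A)
        (norm_adjoint_apply_le_of_comp_adjoint_eq hAP)
  · intro h
    obtain ⟨C, hC⟩ := exists_comp_eq_of_range_le h
    have hA' : adjoint A = adjoint C ∘L A := by
      simpa only [adjoint_comp, adjoint_adjoint] using (congrArg adjoint hC).symm
    refine ⟨C ∘L adjoint C, isPositive_self_comp_adjoint C, ?_⟩
    calc A ∘L adjoint A = (adjoint A ∘L C) ∘L (adjoint C ∘L A) := by rw [hC, ← hA']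
      _ = adjoint A ∘L (C ∘L adjoint C) ∘L A := by simp only [comp_assoc]
end

section
/- A bounded linear operator A on a complex Hilbert space H is posinormal if and only if there exists λ ≥ 0 such that AA* ≤ λ² A*A (in the sense of the ordering on self-adjoint operators). -/
/-!
If `A A* = A* P A` with `P ≥ 0`, then `A A* ≤ ‖P‖ A* A` because `P ≤ ‖P‖` in the C⋆-algebra of
operators. Conversely, `A A* ≤ l² A* A` says exactly that `‖A* x‖ ≤ l ‖A x‖`, so by Douglas'
factorization `A* = D A` for a bounded `D` (sending `A x` to `A* x`, extended to the closure of
the range of `A` and by zero on its orthogonal complement); then `A A* = A* (D* D) A`.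
-/

open ContinuousLinearMap

section Factorization

variable {𝕜 E F G : Type*} [RCLike 𝕜]
  [AddCommGroup E] [Module 𝕜 E] [TopologicalSpace E]
  [NormedAddCommGroup F] [InnerProductSpace 𝕜 F] [CompleteSpace F]
  [NormedAddCommGroup G] [NormedSpace 𝕜 G] [CompleteSpace G]

theorem ContinuousLinearMap.exists_comp_eq_of_norm_apply_le (B : E →L[𝕜] F) (C : E →L[𝕜] G)
    {c : ℝ} (h : ∀ x, ‖C x‖ ≤ c * ‖B x‖) : ∃ D : F →L[𝕜] G, D ∘L B = C := by
  set K := B.range.topologicalClosure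
  let e : E →ₗ[𝕜] K :=
    (B : E →ₗ[𝕜] F).codRestrict K fun x ↦ B.range.le_topologicalClosure ⟨x, rfl⟩
  have he : DenseRange e := by
    rw [DenseRange, Subtype.dense_iff, ← Set.range_comp]
    exact B.range.topologicalClosure_coe.ge
  refine ⟨(C : E →ₗ[𝕜] G).extendOfNorm e ∘L K.orthogonalProjectionOnto, ext fun x ↦ ?_⟩
  have hBx : K.orthogonalProjectionOnto (B x) = e x :=
    K.orthogonalProjectionOnto_mem_subspace_eq_self (e x)
  simp only [comp_apply, hBx]
  exact LinearMap.extendOfNorm_eq he ⟨c, h⟩ x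

end Factorization

theorem ContinuousLinearMap.adjoint_comp_self_le_sq_smul_iff {𝕜 E F : Type*} [RCLike 𝕜]
    [NormedAddCommGroup E] [InnerProductSpace 𝕜 E] [CompleteSpace E]
    [NormedAddCommGroup F] [InnerProductSpace 𝕜 F] [CompleteSpace F]
    (S T : E →L[𝕜] F) {c : ℝ} (hc : 0 ≤ c) :
    adjoint S ∘L S ≤ ((c : 𝕜) ^ 2) • (adjoint T ∘L T) ↔ ∀ x, ‖S x‖ ≤ c * ‖T x‖ := by
  have hsa : IsSelfAdjoint (((c : 𝕜) ^ 2) • (adjoint T ∘L T) - adjoint S ∘L S) :=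
    (((IsSelfAdjoint.all c).algebraMap 𝕜).pow 2 |>.smul
      (isPositive_adjoint_comp_self T).isSelfAdjoint).sub
      (isPositive_adjoint_comp_self S).isSelfAdjoint
  have hre : ∀ x, (((c : 𝕜) ^ 2) • (adjoint T ∘L T) - adjoint S ∘L S).reApplyInnerSelf x =
      (c * ‖T x‖) ^ 2 - ‖S x‖ ^ 2 := by
    intro x
    rw [reApplyInnerSelf, sub_apply, inner_sub_left, map_sub, smul_apply, inner_smul_left,
      ← RCLike.ofReal_pow, RCLike.conj_ofReal, RCLike.re_ofReal_mul,
      ← apply_norm_sq_eq_inner_adjoint_left, ← apply_norm_sq_eq_inner_adjoint_left, mul_pow]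
  simp only [le_def, isPositive_def', hsa, true_and, hre, sub_nonneg]
  exact forall_congr' fun x ↦ pow_le_pow_iff_left₀ (norm_nonneg _) (by positivity) two_ne_zero

theorem ContinuousLinearMap.self_comp_adjoint_eq_of_comp_eq_adjoint {𝕜 H : Type*} [RCLike 𝕜]
    [NormedAddCommGroup H] [InnerProductSpace 𝕜 H] [CompleteSpace H] {A D : H →L[𝕜] H}
    (h : D ∘L A = adjoint A) : A ∘L adjoint A = adjoint A ∘L (adjoint D ∘L D) ∘L A := by
  have hA : adjoint A ∘L adjoint D = A := by
    simpa only [adjoint_comp, adjoint_adjoint] using congrArg adjoint h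
  calc A ∘L adjoint A = (adjoint A ∘L adjoint D) ∘L (D ∘L A) := by rw [hA, h]
    _ = adjoint A ∘L (adjoint D ∘L D) ∘L A := rfl

theorem posinormal_iff_exists_lambda
    {H : Type*} [NormedAddCommGroup H] [InnerProductSpace ℂ H] [CompleteSpace H]
    (A : H →L[ℂ] H) :
    (∃ P : H →L[ℂ] H, P.IsPositive ∧ A ∘L adjoint A = adjoint A ∘L P ∘L A) ↔
      ∃ l : ℝ, 0 ≤ l ∧
        (((l : ℂ) ^ 2) • (adjoint A ∘L A) - A ∘L adjoint A).IsPositive := by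
  simp only [← le_def]
  constructor
  · rintro ⟨P, hP, hAP⟩
    refine ⟨√‖P‖, Real.sqrt_nonneg _, ?_⟩
    have hle := CStarAlgebra.star_left_conjugate_le_norm_smul (a := A) hP.isSelfAdjoint
    rwa [star_eq_adjoint, mul_assoc, mul_def, mul_def, mul_def, ← hAP, ← Complex.coe_smul,
      ← Real.sq_sqrt (norm_nonneg P), Complex.ofReal_pow] at hle
  · rintro ⟨l, hl, hle⟩
    have hnorm : ∀ x, ‖adjoint A x‖ ≤ l * ‖A x‖ := by
      rwa [← adjoint_comp_self_le_sq_smul_iff _ _ hl, adjoint_adjoint]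
    obtain ⟨D, hD⟩ := A.exists_comp_eq_of_norm_apply_le (adjoint A) hnorm
    exact ⟨_, isPositive_adjoint_comp_self D, self_comp_adjoint_eq_of_comp_eq_adjoint hD⟩
end

section
/- A bounded linear operator A on a complex Hilbert space H is posinormal if and only if there exists a bounded linear operator T on H such that A = A*T. -/
/-!
Write the positive operator `P` as `Q* Q`. Then `A A* = (Q A)* (Q A)`, so `‖A* x‖ = ‖Q A x‖`, and
Douglas' factorization gives a bounded `U` with `A* = U Q A`; taking adjoints, `A = A* (Q* U*)`.
Conversely, `A = A* T` gives `A A* = A* (T T*) A`, and `T T*` is positive.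
-/

open ContinuousLinearMap

/-- `U` sends `C x` to `B x`: it is extended by continuity to the closure `K` of the range of `C`,
and by zero on `Kᗮ`. -/
theorem ContinuousLinearMap.exists_eq_comp_of_norm_le {𝕜 E F G : Type*} [RCLike 𝕜]
    [AddCommGroup E] [Module 𝕜 E] [TopologicalSpace E]
    [NormedAddCommGroup F] [NormedSpace 𝕜 F] [CompleteSpace F]
    [NormedAddCommGroup G] [InnerProductSpace 𝕜 G] [CompleteSpace G]
    (B : E →L[𝕜] F) (C : E →L[𝕜] G) (c : ℝ) (h : ∀ x, ‖B x‖ ≤ c * ‖C x‖) :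
    ∃ U : G →L[𝕜] F, B = U ∘L C := by
  set K := (LinearMap.range (C : E →ₗ[𝕜] G)).topologicalClosure
  have : CompleteSpace K := Submodule.isClosed_topologicalClosure _ |>.completeSpace_coe
  let e : E →ₗ[𝕜] K := (C : E →ₗ[𝕜] G).codRestrict K
    fun x ↦ Submodule.le_topologicalClosure _ (LinearMap.mem_range_self _ x)
  have he : DenseRange e := by
    rw [DenseRange, Subtype.dense_iff, ← Set.range_comp]
    exact subset_rfl
  refine ⟨(B : E →ₗ[𝕜] F).extendOfNorm e ∘L K.orthogonalProjectionOnto, ?_⟩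
  ext x
  have hproj : K.orthogonalProjectionOnto (C x) = e x :=
    K.orthogonalProjectionOnto_mem_subspace_eq_self (e x)
  simp [hproj, LinearMap.extendOfNorm_eq he ⟨c, h⟩]

theorem ContinuousLinearMap.norm_apply_eq_of_adjoint_comp_self_eq {𝕜 E F G : Type*} [RCLike 𝕜]
    [NormedAddCommGroup E] [InnerProductSpace 𝕜 E] [CompleteSpace E]
    [NormedAddCommGroup F] [InnerProductSpace 𝕜 F] [CompleteSpace F]
    [NormedAddCommGroup G] [InnerProductSpace 𝕜 G] [CompleteSpace G]
    {B : E →L[𝕜] F} {C : E →L[𝕜] G} (h : adjoint B ∘L B = adjoint C ∘L C) (x : E) :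
    ‖B x‖ = ‖C x‖ := by
  rw [← sq_eq_sq₀ (norm_nonneg _) (norm_nonneg _), apply_norm_sq_eq_inner_adjoint_right,
    apply_norm_sq_eq_inner_adjoint_right, h]

theorem posinormal_iff_factor
    {H : Type*} [NormedAddCommGroup H] [InnerProductSpace ℂ H] [CompleteSpace H]
    (A : H →L[ℂ] H) :
    (∃ P : H →L[ℂ] H, P.IsPositive ∧ A ∘L adjoint A = adjoint A ∘L P ∘L A) ↔
      ∃ T : H →L[ℂ] H, A = adjoint A ∘L T := by
  constructor
  · rintro ⟨P, hP, hAA⟩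
    obtain ⟨Q, rfl⟩ :=
      CStarAlgebra.nonneg_iff_eq_star_mul_self.mp ((nonneg_iff_isPositive P).mpr hP)
    have hnorm : ∀ x, ‖adjoint A x‖ = ‖(Q ∘L A) x‖ :=
      norm_apply_eq_of_adjoint_comp_self_eq <| by
        rw [adjoint_adjoint, hAA, adjoint_comp, star_eq_adjoint]; rfl
    obtain ⟨U, hU⟩ := (adjoint A).exists_eq_comp_of_norm_le (Q ∘L A) 1 fun x ↦ by simp [hnorm]
    refine ⟨adjoint Q ∘L adjoint U, ?_⟩
    calc A = adjoint (adjoint A) := (adjoint_adjoint A).symm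
      _ = adjoint (U ∘L Q ∘L A) := by rw [hU]
      _ = adjoint A ∘L adjoint Q ∘L adjoint U := by simp only [adjoint_comp, comp_assoc]
  · rintro ⟨T, hT⟩
    refine ⟨T ∘L adjoint T, isPositive_self_comp_adjoint T, ?_⟩
    calc A ∘L adjoint A = (adjoint A ∘L T) ∘L adjoint (adjoint A ∘L T) := by rw [← hT]
      _ = adjoint A ∘L (T ∘L adjoint T) ∘L A := by
        simp only [adjoint_comp, adjoint_adjoint, comp_assoc]
end

section
/- If T is a posinormal bounded linear operator on a complex Hilbert space and T has closed range, then T² also has closed range. -/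
/-!
Posinormality gives `ran T ⊆ ran T† ⊆ (ker T)ᗮ`. By the open mapping theorem, an operator with
closed range is bounded below on `(ker T)ᗮ`, hence on the closed subspace `ran T`; so it maps
`ran T` onto a closed set, and `T '' ran T = ran T²`.
-/

open ContinuousLinearMap

namespace ContinuousLinearMap

variable {𝕜 E F : Type*} [RCLike 𝕜] [NormedAddCommGroup E] [InnerProductSpace 𝕜 E] [CompleteSpace E]

theorem range_le_orthogonal_ker_of_range_le_range_adjoint {T : E →L[𝕜] E}
    (hT : T.range ≤ (adjoint T).range) : T.range ≤ T.kerᗮ := by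
  rw [orthogonal_ker]
  exact hT.trans (Submodule.le_topologicalClosure _)

variable [NormedAddCommGroup F] [NormedSpace 𝕜 F] [CompleteSpace F]

theorem exists_norm_le_mul_norm_of_mem_orthogonal_ker {T : E →L[𝕜] F}
    (hT : IsClosed (T.range : Set F)) : ∃ K : NNReal, ∀ x ∈ T.kerᗮ, ‖x‖ ≤ K * ‖T x‖ := by
  have h_ker : (T ∘L T.kerᗮ.subtypeL : T.kerᗮ →ₗ[𝕜] F).ker = ⊥ := by
    rw [toLinearMap_comp, LinearMap.ker_comp, Submodule.toLinearMap_subtypeL,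
      ← Submodule.disjoint_iff_comap_eq_bot]
    exact T.ker.orthogonal_disjoint.symm
  have h_range : (T ∘L T.kerᗮ.subtypeL : T.kerᗮ →ₗ[𝕜] F).range = T.range := by
    rw [toLinearMap_comp, LinearMap.range_comp, Submodule.toLinearMap_subtypeL,
      Submodule.range_subtype, Submodule.map_eq_range_iff]
    exact T.ker.isCompl_orthogonal.codisjoint.symm
  obtain ⟨K, hK⟩ := (T ∘L T.kerᗮ.subtypeL).antilipschitz_of_injective_of_isClosed_range
    (LinearMap.ker_eq_bot.mp h_ker) (by rwa [← coe_coe, ← LinearMap.coe_range, h_range])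
  exact ⟨K, fun x hx => by simpa using hK.le_mul_norm_sub ⟨x, hx⟩ 0⟩

theorem isClosed_map_of_le_orthogonal_ker {T : E →L[𝕜] F} (hT : IsClosed (T.range : Set F))
    {V : Submodule 𝕜 E} (hV : IsClosed (V : Set E)) (hVT : V ≤ T.kerᗮ) :
    IsClosed (V.map (T : E →ₗ[𝕜] F) : Set F) := by
  obtain ⟨K, hK⟩ := exists_norm_le_mul_norm_of_mem_orthogonal_ker hT
  have : CompleteSpace V := hV.completeSpace_coe
  have hanti : AntilipschitzWith K (T ∘L V.subtypeL) :=
    antilipschitz_of_bound _ fun x => hK x (hVT x.2)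
  rw [← V.range_subtype, ← LinearMap.range_comp]
  exact hanti.isClosed_range (T ∘L V.subtypeL).uniformContinuous

end ContinuousLinearMap

theorem sq_closed_range
    {H : Type*} [NormedAddCommGroup H] [InnerProductSpace ℂ H] [CompleteSpace H]
    (T : H →L[ℂ] H) (hpos : LinearMap.range (T : H →ₗ[ℂ] H) ≤ LinearMap.range ((adjoint T : H →L[ℂ] H) : H →ₗ[ℂ] H))
    (hT : IsClosed (LinearMap.range (T : H →ₗ[ℂ] H) : Set H)) :
    IsClosed (LinearMap.range ((T ∘L T : H →L[ℂ] H) : H →ₗ[ℂ] H) : Set H) := by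
  rw [toLinearMap_comp, LinearMap.range_comp]
  exact isClosed_map_of_le_orthogonal_ker hT hT
    (range_le_orthogonal_ker_of_range_le_range_adjoint hpos)
end

section
/- If T is a posinormal bounded linear operator on a complex Hilbert space, then ker T = ker T². -/
open ContinuousLinearMap

theorem LinearMap.ker_comp_self_eq_of_disjoint {R M : Type*} [Semiring R] [AddCommMonoid M]
    [Module R M] {f : M →ₗ[R] M} (h : Disjoint (ker f) (range f)) : ker (f ∘ₗ f) = ker f := by
  refine le_antisymm (fun x hx ↦ ?_) (ker_le_ker_comp f f)
  exact h.le_bot ⟨hx, mem_range_self f x⟩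

theorem ContinuousLinearMap.disjoint_ker_range_adjoint {𝕜 E F : Type*} [RCLike 𝕜]
    [NormedAddCommGroup E] [InnerProductSpace 𝕜 E] [CompleteSpace E]
    [NormedAddCommGroup F] [InnerProductSpace 𝕜 F] [CompleteSpace F] (T : E →L[𝕜] F) :
    Disjoint (LinearMap.ker (T : E →ₗ[𝕜] F)) (LinearMap.range (adjoint T : F →ₗ[𝕜] E)) := by
  have := (adjoint T).orthogonal_range
  rw [adjoint_adjoint] at this
  exact this ▸ (Submodule.orthogonal_disjoint _).symm

theorem ker_eq_ker_sq
    {H : Type*} [NormedAddCommGroup H] [InnerProductSpace ℂ H] [CompleteSpace H]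
    (T : H →L[ℂ] H) (hpos : LinearMap.range (T : H →ₗ[ℂ] H) ≤ LinearMap.range (adjoint T : H →ₗ[ℂ] H)) :
    LinearMap.ker (T : H →ₗ[ℂ] H) = LinearMap.ker ((T ∘L T : H →L[ℂ] H) : H →ₗ[ℂ] H) := by
  rw [toLinearMap_comp, LinearMap.ker_comp_self_eq_of_disjoint]
  exact T.disjoint_ker_range_adjoint.mono_right hpos
end

section
/- If T is a posinormal bounded linear operator with closed range on a complex Hilbert space, then ran T* = ran (T*)². -/
/-! Since ran T is closed, H = ran T ⊕ (ran T)ᗮ = ran T + ker T*, and posinormality enlarges this to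
H = ran T* + ker T*. Applying T* to both sides gives ran T* = T*(ran T*) = ran (T*)². -/

open ContinuousLinearMap

theorem LinearMap.range_comp_eq_range_of_range_sup_ker_eq_top {R M N P : Type*} [Semiring R]
    [AddCommMonoid M] [AddCommMonoid N] [AddCommMonoid P] [Module R M] [Module R N] [Module R P]
    (f : M →ₗ[R] N) (g : N →ₗ[R] P) (h : LinearMap.range f ⊔ LinearMap.ker g = ⊤) :
    LinearMap.range (g ∘ₗ f) = LinearMap.range g := by
  rw [LinearMap.range_comp, LinearMap.range_eq_map g, ← h, Submodule.map_sup,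
    LinearMap.le_ker_iff_map.mp le_rfl, sup_bot_eq]

theorem ContinuousLinearMap.range_sup_ker_adjoint_eq_top {𝕜 E F : Type*} [RCLike 𝕜]
    [NormedAddCommGroup E] [InnerProductSpace 𝕜 E] [CompleteSpace E]
    [NormedAddCommGroup F] [InnerProductSpace 𝕜 F] [CompleteSpace F]
    (T : E →L[𝕜] F) (hT : IsClosed (LinearMap.range (T : E →ₗ[𝕜] F) : Set F)) :
    LinearMap.range (T : E →ₗ[𝕜] F) ⊔ LinearMap.ker (adjoint T : F →ₗ[𝕜] E) = ⊤ := by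
  have : CompleteSpace (LinearMap.range (T : E →ₗ[𝕜] F)) := hT.completeSpace_coe
  rw [← orthogonal_range]
  exact Submodule.sup_orthogonal_of_hasOrthogonalProjection

theorem range_adjoint_eq_range_adjoint_sq
    {H : Type*} [NormedAddCommGroup H] [InnerProductSpace ℂ H] [CompleteSpace H]
    (T : H →L[ℂ] H) (hpos : LinearMap.range (T : H →ₗ[ℂ] H) ≤ LinearMap.range (adjoint T : H →ₗ[ℂ] H))
    (hT : IsClosed (LinearMap.range (T : H →ₗ[ℂ] H) : Set H)) :
    LinearMap.range (adjoint T : H →ₗ[ℂ] H) = LinearMap.range ((adjoint T ∘L adjoint T : H →L[ℂ] H) : H →ₗ[ℂ] H) := by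
  refine (LinearMap.range_comp_eq_range_of_range_sup_ker_eq_top _ _ ?_).symm
  exact top_unique ((T.range_sup_ker_adjoint_eq_top hT).ge.trans (sup_le_sup_right hpos _))
end

section
/- If T is a posinormal bounded linear operator with closed range on a complex Hilbert space, then for every n ≥ 1, Tⁿ is posinormal and Tⁿ has closed range. -/
open ContinuousLinearMap

open scoped InnerProductSpace NNReal

/-!
Posinormality gives `ran T ⊆ ran T* ⊆ (ker T)ᗮ`, so `ran T ∩ ker T = 0`; hence `ker Tⁿ = ker T`
and `T` maps `M = (ker T)ᗮ` into itself. Closed range means that `T` is bounded below on `M`, so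
`Tⁿ` is bounded below on `M = (ker Tⁿ)ᗮ` and has closed range. By the closed range theorem,
`ran Tⁿ ⊆ ran T ⊆ (ker Tⁿ)ᗮ = ran (Tⁿ)*`.
-/

theorem Module.End.ker_pow_eq_ker_of_disjoint {R M : Type*} [Semiring R] [AddCommMonoid M]
    [Module R M] {f : Module.End R M} (h : Disjoint (LinearMap.range f) (LinearMap.ker f))
    {n : ℕ} (hn : n ≠ 0) : LinearMap.ker (f ^ n) = LinearMap.ker f := by
  obtain ⟨k, rfl⟩ := Nat.exists_eq_succ_of_ne_zero hn
  clear hn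
  induction k with
  | zero => rw [pow_one]
  | succ k ih =>
    ext x
    rw [LinearMap.mem_ker, pow_succ, Module.End.mul_apply, ← LinearMap.mem_ker, ih]
    exact ⟨fun hx => Submodule.disjoint_def.1 h _ (LinearMap.mem_range_self f x) hx,
      fun hx => by simp [LinearMap.mem_ker.1 hx]⟩

theorem Module.End.range_pow_le_range {R M : Type*} [Semiring R] [AddCommMonoid M]
    [Module R M] (f : Module.End R M) {n : ℕ} (hn : n ≠ 0) :
    LinearMap.range (f ^ n) ≤ LinearMap.range f := by
  obtain ⟨k, rfl⟩ := Nat.exists_eq_succ_of_ne_zero hn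
  rw [pow_succ', Module.End.mul_eq_comp]
  exact LinearMap.range_comp_le_range _ _

namespace ContinuousLinearMap

theorem norm_le_pow_mul_norm_pow_apply {R E : Type*} [Semiring R] [SeminormedAddCommGroup E]
    [Module R E] (T : E →L[R] E) {s : Set E} (hs : Set.MapsTo T s s) {c : ℝ≥0}
    (hc : ∀ v ∈ s, ‖v‖ ≤ c * ‖T v‖) (n : ℕ) : ∀ v ∈ s, ‖v‖ ≤ c ^ n * ‖(T ^ n) v‖ := by
  induction n with
  | zero => simp
  | succ n ih =>
    intro v hv
    calc ‖v‖ ≤ c * ‖T v‖ := hc v hv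
      _ ≤ c * (c ^ n * ‖(T ^ n) (T v)‖) := by gcongr; exact ih _ (hs hv)
      _ = c ^ (n + 1) * ‖(T ^ (n + 1)) v‖ := by rw [pow_succ' (c : ℝ), mul_assoc, pow_succ T]; rfl

variable {𝕜 E F : Type*} [RCLike 𝕜]
  [NormedAddCommGroup E] [InnerProductSpace 𝕜 E] [CompleteSpace E]
  [NormedAddCommGroup F] [InnerProductSpace 𝕜 F]

section ClosedRange

variable (A : E →L[𝕜] F)

theorem range_comp_subtypeL_orthogonal_ker :
    (A ∘L A.kerᗮ.subtypeL).range = A.range := by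
  refine le_antisymm (LinearMap.range_comp_le_range _ _) ?_
  rintro _ ⟨x, rfl⟩
  have : CompleteSpace A.ker := A.isClosed_ker.completeSpace_coe
  have hx : x - A.kerᗮ.starProjection x ∈ A.ker := by
    simpa only [Submodule.orthogonal_orthogonal] using A.kerᗮ.sub_starProjection_mem_orthogonal x
  refine ⟨A.kerᗮ.orthogonalProjectionOnto x, ?_⟩
  rw [LinearMap.mem_ker, map_sub, sub_eq_zero] at hx
  exact hx.symm

variable [CompleteSpace F]

theorem isClosed_range_iff_exists_bound_orthogonal_ker :
    IsClosed (A.range : Set F) ↔ ∃ c : ℝ≥0, ∀ v ∈ A.kerᗮ, ‖v‖ ≤ c * ‖A v‖ := by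
  set g := A ∘L A.kerᗮ.subtypeL
  have hg : Function.Injective g := by
    refine (injective_iff_map_eq_zero g).2 fun v hv => ?_
    exact Subtype.ext <| Submodule.disjoint_def.1 A.ker.orthogonal_disjoint v hv v.2
  have hrange : Set.range g = A.range := by
    rw [← A.range_comp_subtypeL_orthogonal_ker]; rfl
  rw [← hrange, g.isClosed_range_iff_antilipschitz_of_injective hg]
  constructor
  · rintro ⟨c, hc⟩
    exact ⟨c, fun v hv => g.bound_of_antilipschitz hc ⟨v, hv⟩⟩
  · rintro ⟨c, hc⟩
    exact ⟨c, g.antilipschitz_of_bound fun v => hc v v.2⟩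

theorem range_adjoint_le_orthogonal_ker : (adjoint A).range ≤ A.kerᗮ :=
  A.orthogonal_ker ▸ Submodule.le_topologicalClosure _

/-- For `y = A v` with `v ⊥ ker A`, `‖y‖² = re ⟪v, A† y⟫ ≤ c ‖y‖ ‖A† y‖`, so `A†` is bounded
below on `ran A = (ker A†)ᗮ`. -/
theorem isClosed_range_adjoint (hA : IsClosed (A.range : Set F)) :
    IsClosed ((adjoint A).range : Set E) := by
  obtain ⟨c, hc⟩ := (A.isClosed_range_iff_exists_bound_orthogonal_ker).1 hA
  refine (isClosed_range_iff_exists_bound_orthogonal_ker _).2 ⟨c, fun y hy => ?_⟩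
  rw [orthogonal_ker, adjoint_adjoint, hA.submodule_topologicalClosure_eq,
    ← range_comp_subtypeL_orthogonal_ker] at hy
  obtain ⟨⟨v, hv⟩, rfl⟩ := hy
  change ‖A v‖ ≤ c * ‖adjoint A (A v)‖
  have key : ‖A v‖ * ‖A v‖ ≤ ‖A v‖ * (c * ‖adjoint A (A v)‖) := calc
    ‖A v‖ * ‖A v‖ = RCLike.re ⟪v, adjoint A (A v)⟫_𝕜 := by
      rw [adjoint_inner_right, inner_self_eq_norm_mul_norm]
    _ ≤ ‖v‖ * ‖adjoint A (A v)‖ := re_inner_le_norm _ _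
    _ ≤ c * ‖A v‖ * ‖adjoint A (A v)‖ := by gcongr; exact hc v hv
    _ = ‖A v‖ * (c * ‖adjoint A (A v)‖) := by ring
  rcases (norm_nonneg (A v)).eq_or_lt with h | h
  · rw [← h]; positivity
  · exact le_of_mul_le_mul_left key h

theorem orthogonal_ker_eq_range_adjoint (hA : IsClosed (A.range : Set F)) :
    A.kerᗮ = (adjoint A).range := by
  rw [orthogonal_ker, (A.isClosed_range_adjoint hA).submodule_topologicalClosure_eq]

end ClosedRange

def IsPosinormal (T : E →L[𝕜] E) : Prop :=
  T.range ≤ (adjoint T).range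

namespace IsPosinormal

variable {T : E →L[𝕜] E}

theorem range_le_orthogonal_ker (hT : IsPosinormal T) : T.range ≤ T.kerᗮ :=
  hT.trans T.range_adjoint_le_orthogonal_ker

theorem ker_pow (hT : IsPosinormal T) {n : ℕ} (hn : n ≠ 0) : (T ^ n).ker = T.ker := by
  rw [toLinearMap_pow]
  exact Module.End.ker_pow_eq_ker_of_disjoint
    (T.ker.orthogonal_disjoint.symm.mono_left hT.range_le_orthogonal_ker) hn

theorem isClosed_range_pow (hT : IsPosinormal T) (hTc : IsClosed (T.range : Set E)) {n : ℕ}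
    (hn : n ≠ 0) :
    IsClosed ((T ^ n).range : Set E) := by
  obtain ⟨c, hc⟩ := (T.isClosed_range_iff_exists_bound_orthogonal_ker).1 hTc
  refine ((T ^ n).isClosed_range_iff_exists_bound_orthogonal_ker).2 ⟨c ^ n, ?_⟩
  rw [hT.ker_pow hn, NNReal.coe_pow]
  exact T.norm_le_pow_mul_norm_pow_apply
    (fun v _ => hT.range_le_orthogonal_ker ⟨v, rfl⟩) hc n

theorem pow (hT : IsPosinormal T) (hTc : IsClosed (T.range : Set E)) {n : ℕ} (hn : n ≠ 0) :
    IsPosinormal (T ^ n) :=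
  calc (T ^ n).range ≤ T.range := by
        rw [toLinearMap_pow]; exact Module.End.range_pow_le_range _ hn
    _ ≤ T.kerᗮ := hT.range_le_orthogonal_ker
    _ = (T ^ n).kerᗮ := by rw [hT.ker_pow hn]
    _ = (adjoint (T ^ n)).range :=
        (T ^ n).orthogonal_ker_eq_range_adjoint (hT.isClosed_range_pow hTc hn)

end IsPosinormal

end ContinuousLinearMap

theorem pow_posinormal_closed_range
    {H : Type*} [NormedAddCommGroup H] [InnerProductSpace ℂ H] [CompleteSpace H]
    (T : H →L[ℂ] H) (hpos : LinearMap.range (T : H →ₗ[ℂ] H) ≤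
      LinearMap.range ((adjoint T : H →L[ℂ] H) : H →ₗ[ℂ] H))
    (hT : IsClosed (LinearMap.range (T : H →ₗ[ℂ] H) : Set H)) :
    ∀ n : ℕ, 1 ≤ n →
      LinearMap.range ((T ^ n : H →L[ℂ] H) : H →ₗ[ℂ] H) ≤
        LinearMap.range ((adjoint (T ^ n) : H →L[ℂ] H) : H →ₗ[ℂ] H) ∧
        IsClosed (LinearMap.range ((T ^ n : H →L[ℂ] H) : H →ₗ[ℂ] H) : Set H) := by
  intro n hn
  have hpos : IsPosinormal T := hpos
  have hn : n ≠ 0 := Nat.one_le_iff_ne_zero.mp hn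
  exact ⟨hpos.pow hT hn, hpos.isClosed_range_pow hT hn⟩
end

section
/- If T is a normal bounded linear operator with closed range on a complex Hilbert space, then Tⁿ has closed range for all n ≥ 1. -/
/-!
For a normal operator `ker T = (range T)ᗮ`, so a closed range gives `H = range T ⊕ ker T`.
Hence `T` maps `range T` onto `range T`, and `range Tⁿ = range T` for every `n ≥ 1`.
-/

open ContinuousLinearMap

theorem LinearMap.range_pow_eq_range_of_codisjoint {R M : Type*} [Semiring R] [AddCommMonoid M]
    [Module R M] {f : Module.End R M} (h : Codisjoint (LinearMap.range f) (LinearMap.ker f))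
    {n : ℕ} (hn : 1 ≤ n) : LinearMap.range (f ^ n) = LinearMap.range f := by
  induction n, hn using Nat.le_induction with
  | base => rw [pow_one]
  | succ n _ ih =>
    calc LinearMap.range (f ^ (n + 1)) = (LinearMap.range f).map f := by
          rw [pow_succ', Module.End.mul_eq_comp, LinearMap.range_comp, ih]
      _ = (LinearMap.range f ⊔ LinearMap.ker f).map f := by
          rw [Submodule.map_sup, LinearMap.le_ker_iff_map.mp le_rfl, sup_bot_eq]
      _ = LinearMap.range f := by rw [h.eq_top, Submodule.map_top]

namespace ContinuousLinearMap

variable {𝕜 E : Type*} [RCLike 𝕜] [NormedAddCommGroup E] [InnerProductSpace 𝕜 E] [CompleteSpace E]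
  {T : E →L[𝕜] E}

theorem IsStarNormal.codisjoint_range_ker (hT : IsStarNormal T)
    (hclosed : IsClosed (T.range : Set E)) : Codisjoint T.range T.ker := by
  have : CompleteSpace T.range := hclosed.completeSpace_coe
  rw [codisjoint_iff, ← hT.orthogonal_range]
  exact Submodule.sup_orthogonal_of_hasOrthogonalProjection

theorem IsStarNormal.range_pow_eq_range (hT : IsStarNormal T)
    (hclosed : IsClosed (T.range : Set E)) {n : ℕ} (hn : 1 ≤ n) : (T ^ n).range = T.range := by
  rw [toLinearMap_pow]
  exact LinearMap.range_pow_eq_range_of_codisjoint (hT.codisjoint_range_ker hclosed) hn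

end ContinuousLinearMap

theorem normal_pow_closed_range
    {H : Type*} [NormedAddCommGroup H] [InnerProductSpace ℂ H] [CompleteSpace H]
    (T : H →L[ℂ] H) (hnormal : T ∘L adjoint T = adjoint T ∘L T)
    (hT : IsClosed (LinearMap.range (T : H →ₗ[ℂ] H) : Set H)) :
    ∀ n : ℕ, 1 ≤ n → IsClosed (LinearMap.range ((T ^ n : H →L[ℂ] H) : H →ₗ[ℂ] H) : Set H) := by
  have hT_normal : IsStarNormal T := ⟨by rw [star_eq_adjoint]; exact hnormal.symm⟩
  intro n hn
  rw [hT_normal.range_pow_eq_range hT hn]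
  exact hT
end

section
/- The operator U* + 2U, where U is the unilateral shift on ℓ², is bounded below: ‖(U* + 2U)s‖ ≥ ‖s‖ for every s ∈ ℓ²; in particular U* + 2U has closed range. -/
/-! The shift `U` is an isometry, so `‖U*‖ = ‖U‖ ≤ 1`, and the reverse triangle inequality gives
`‖(U* + 2U)s‖ ≥ 2‖Us‖ - ‖U*s‖ ≥ ‖s‖`. An operator on a Banach space that is bounded below is
antilipschitz, hence has closed range. -/

open ContinuousLinearMap

theorem lp.norm_eq_of_shift_eq {E : Type*} [NormedAddCommGroup E] {p : ENNReal}
    (hp : 0 < p.toReal) {s t : lp (fun _ : ℕ => E) p} (h0 : t 0 = 0)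
    (hsucc : ∀ n, t (n + 1) = s n) : ‖t‖ = ‖s‖ := by
  rw [lp.norm_eq_tsum_rpow hp, lp.norm_eq_tsum_rpow hp,
    ((lp.memℓp t).summable hp).tsum_eq_zero_add]
  simp [h0, hsucc, Real.zero_rpow hp.ne']

theorem ContinuousLinearMap.norm_le_norm_add_two_smul_apply {𝕜 E F : Type*} [RCLike 𝕜]
    [NormedAddCommGroup E] [NormedAddCommGroup F] [NormedSpace 𝕜 E] [NormedSpace 𝕜 F]
    (A U : E →L[𝕜] F) (hA : ‖A‖ ≤ 1) (hU : ∀ x, ‖x‖ ≤ ‖U x‖) (x : E) :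
    ‖x‖ ≤ ‖(A + 2 • U) x‖ := by
  have hAx : ‖A x‖ ≤ ‖x‖ := A.le_of_opNorm_le hA x |>.trans_eq (one_mul _)
  have hsplit : 2 * ‖U x‖ ≤ ‖(A + 2 • U) x‖ + ‖A x‖ := by
    calc 2 * ‖U x‖ = ‖(A + 2 • U) x - A x‖ := by simp [RCLike.norm_nsmul 𝕜]
      _ ≤ ‖(A + 2 • U) x‖ + ‖A x‖ := norm_sub_le _ _
  linarith [hU x]

theorem shift_combination_bounded_below
    (U : lp (fun _ : ℕ => ℂ) 2 →L[ℂ] lp (fun _ : ℕ => ℂ) 2)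
    (hU0 : ∀ s : lp (fun _ : ℕ => ℂ) 2, (U s : ∀ _ : ℕ, ℂ) 0 = 0)
    (hUsucc : ∀ (s : lp (fun _ : ℕ => ℂ) 2) (n : ℕ),
      (U s : ∀ _ : ℕ, ℂ) (n + 1) = (s : ∀ _ : ℕ, ℂ) n) :
    (∀ s : lp (fun _ : ℕ => ℂ) 2, ‖s‖ ≤ ‖(adjoint U + 2 • U) s‖) ∧
      IsClosed (LinearMap.range ((adjoint U + 2 • U : lp (fun _ : ℕ => ℂ) 2 →L[ℂ] lp (fun _ : ℕ => ℂ) 2) :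
          lp (fun _ : ℕ => ℂ) 2 →ₗ[ℂ] lp (fun _ : ℕ => ℂ) 2) :
        Set (lp (fun _ : ℕ => ℂ) 2)) := by
  have hU : ∀ s, ‖U s‖ = ‖s‖ := fun s => lp.norm_eq_of_shift_eq (by norm_num) (hU0 s) (hUsucc s)
  have hadj : ‖adjoint U‖ ≤ 1 := by
    rw [LinearIsometryEquiv.norm_map]
    exact opNorm_le_bound U zero_le_one fun s => by rw [hU, one_mul]
  have below := norm_le_norm_add_two_smul_apply _ U hadj fun s => (hU s).ge
  refine ⟨below, ?_⟩
  rw [LinearMap.coe_range, coe_coe]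
  exact ((adjoint U + 2 • U).antilipschitz_of_bound (K := 1) (by simpa using below)).isClosed_range
    (adjoint U + 2 • U).uniformContinuous
end

section
/- If T is posinormal with closed range on a complex Hilbert space, then its restriction to ran T* is bounded below and maps ran T* into ran T*; consequently there exists c > 0 such that ‖T²h‖ ≥ c²‖h‖ for all h ∈ ran T*. -/
/-!
On `(ker T)ᗮ` the operator `T` is injective with the same (closed) range, so by the open mapping
theorem it is bounded below there. Since `(ker T)ᗮ` is the closure of `ran T*`, this bound holds
on `ran T*`; posinormality makes `ran T*` invariant under `T`, so the bound can be applied twice.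
-/

open ContinuousLinearMap

namespace ContinuousLinearMap

variable {𝕜 E F : Type*} [RCLike 𝕜] [NormedAddCommGroup E] [InnerProductSpace 𝕜 E]

section NormedSpace

variable [NormedAddCommGroup F] [NormedSpace 𝕜 F] (T : E →L[𝕜] F)

theorem injective_comp_subtypeL_orthogonal_ker :
    Function.Injective (T ∘L (LinearMap.ker (T : E →ₗ[𝕜] F))ᗮ.subtypeL) :=
  (injective_iff_map_eq_zero _).mpr fun x hx ↦
    Subtype.ext <| Submodule.disjoint_def.mp (Submodule.orthogonal_disjoint _) (x : E) hx x.2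

theorem range_comp_subtypeL_orthogonal_ker_s19 [CompleteSpace E] :
    Set.range (T ∘L (LinearMap.ker (T : E →ₗ[𝕜] F))ᗮ.subtypeL) = Set.range T := by
  refine subset_antisymm (fun _ ⟨x, hx⟩ ↦ ⟨x, hx⟩) ?_
  rintro _ ⟨x, rfl⟩
  obtain ⟨u, hu, v, hv, rfl⟩ :=
    (LinearMap.ker (T : E →ₗ[𝕜] F)).exists_add_mem_mem_orthogonal x
  have hTu : T u = 0 := hu
  exact ⟨⟨v, hv⟩, by simp [hTu]⟩

theorem exists_pos_mul_norm_le_of_mem_orthogonal_ker [CompleteSpace E] [CompleteSpace F]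
    (hT : IsClosed (LinearMap.range (T : E →ₗ[𝕜] F) : Set F)) :
    ∃ c > 0, ∀ x ∈ (LinearMap.ker (T : E →ₗ[𝕜] F))ᗮ, c * ‖x‖ ≤ ‖T x‖ := by
  obtain ⟨c, hc, hbound⟩ := antilipschitzWith_iff_exists_mul_le_norm.mp <|
    antilipschitz_of_injective_of_isClosed_range _ (injective_comp_subtypeL_orthogonal_ker T)
      ((range_comp_subtypeL_orthogonal_ker_s19 T).symm ▸ hT)
  exact ⟨c, hc, fun x hx ↦ hbound ⟨x, hx⟩⟩

end NormedSpace

theorem range_adjoint_le_orthogonal_ker_s19 [CompleteSpace E] [NormedAddCommGroup F]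
    [InnerProductSpace 𝕜 F] [CompleteSpace F] (T : E →L[𝕜] F) :
    LinearMap.range (adjoint T : F →ₗ[𝕜] E) ≤ (LinearMap.ker (T : E →ₗ[𝕜] F))ᗮ :=
  T.orthogonal_ker ▸ Submodule.le_topologicalClosure _

end ContinuousLinearMap

theorem restriction_bounded_below
    {H : Type*} [NormedAddCommGroup H] [InnerProductSpace ℂ H] [CompleteSpace H]
    (T : H →L[ℂ] H) (hpos : LinearMap.range (T : H →ₗ[ℂ] H) ≤ LinearMap.range (adjoint T : H →ₗ[ℂ] H))
    (hT : IsClosed (LinearMap.range (T : H →ₗ[ℂ] H) : Set H)) :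
    ∃ c : ℝ, 0 < c ∧
      (∀ h ∈ LinearMap.range (adjoint T : H →ₗ[ℂ] H),
        c * ‖h‖ ≤ ‖T h‖ ∧ T h ∈ LinearMap.range (adjoint T : H →ₗ[ℂ] H)) ∧
      ∀ h ∈ LinearMap.range (adjoint T : H →ₗ[ℂ] H), c ^ 2 * ‖h‖ ≤ ‖T (T h)‖ := by
  obtain ⟨c, hc, hbound⟩ := T.exists_pos_mul_norm_le_of_mem_orthogonal_ker hT
  have hbelow : ∀ h ∈ LinearMap.range (adjoint T : H →ₗ[ℂ] H), c * ‖h‖ ≤ ‖T h‖ :=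
    fun h hh ↦ hbound h (T.range_adjoint_le_orthogonal_ker_s19 hh)
  have hmaps : ∀ h, T h ∈ LinearMap.range (adjoint T : H →ₗ[ℂ] H) :=
    fun h ↦ hpos (LinearMap.mem_range_self _ h)
  refine ⟨c, hc, fun h hh ↦ ⟨hbelow h hh, hmaps h⟩, fun h hh ↦ ?_⟩
  calc c ^ 2 * ‖h‖ = c * (c * ‖h‖) := by ring
    _ ≤ c * ‖T h‖ := by gcongr; exact hbelow h hh
    _ ≤ ‖T (T h)‖ := hbelow (T h) (hmaps h)
end
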